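/- arXiv:2002.00403 — 2 statements merged into one kernel-verified Lean document; each statement's English description precedes it below -/
import Mathlib

section
/- Fix a number k of devices to schedule and a success probability p ∈ [0,1]. Among all subsets A of {1,…,K} with |A| = k, the expected next-slot average age E[(1/K) Σ_i δ'_i] = (1/K)(Σ_{i=1}^{K} δ_i + K − p Σ_{i∈A} δ_i) is minimized by choosing A to consist of the k devices with the largest current ages. Hence the optimal scheduling policy need only be searched over the K+1 actions 'schedule the top-k ages, k = 0, 1, …, K', reducing the action space from 2^K to K+1. -/
open Finset

theorem Antitone.sum_le_sum_of_isLowerSet {ι M : Type*} [LinearOrder ι] [AddCommMonoid M]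
    [PartialOrder M] [IsOrderedAddMonoid M] {f : ι → M} (hf : Antitone f) {s t : Finset ι}
    (hs : IsLowerSet (s : Set ι)) (hcard : #t = #s) :
    ∑ i ∈ t, f i ≤ ∑ i ∈ s, f i := by
  have hlt : ∀ a ∈ t \ s, ∀ b ∈ s \ t, b < a := fun a ha b hb =>
    lt_of_not_ge fun hab => (mem_sdiff.1 ha).2 (hs hab (mem_sdiff.1 hb).1)
  -- pair off the elements outside the common part; each swap can only increase the sum
  let e : (t \ s : Finset ι) ≃ (s \ t : Finset ι) := equivOfCardEq (card_sdiff_comm hcard)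
  have hswap : ∑ i ∈ t \ s, f i ≤ ∑ i ∈ s \ t, f i := by
    rw [← sum_coe_sort (t \ s), ← sum_coe_sort (s \ t), ← e.sum_comp]
    exact sum_le_sum fun a _ => hf (hlt a a.2 (e a) (e a).2).le
  calc ∑ i ∈ t, f i = ∑ i ∈ s ∩ t, f i + ∑ i ∈ t \ s, f i := by
        rw [inter_comm, sum_inter_add_sum_sdiff]
    _ ≤ ∑ i ∈ s ∩ t, f i + ∑ i ∈ s \ t, f i := by gcongr
    _ = ∑ i ∈ s, f i := sum_inter_add_sum_sdiff s t f

theorem Fin.isLowerSet_filter_val_lt (K k : ℕ) :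
    IsLowerSet ((univ.filter fun i : Fin K => (i : ℕ) < k : Finset (Fin K)) : Set (Fin K)) :=
  fun _ _ hba ha => by
    simp only [coe_filter, mem_univ, true_and, Set.mem_ofPred_eq] at ha ⊢
    exact lt_of_le_of_lt hba ha

theorem topk_minimizes_expected_age_general {K : ℕ} (δ : Fin K → ℝ)
    (hsort : Antitone δ)
    (p : ℝ) (hp0 : 0 ≤ p) (k : ℕ) (hkK : k ≤ K)
    (A : Finset (Fin K)) (hA : A.card = k) :
    (1 / (K : ℝ)) * (∑ i, δ i + (K : ℝ)
        - p * ∑ i ∈ univ.filter (fun i : Fin K => (i : ℕ) < k), δ i)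
      ≤ (1 / (K : ℝ)) * (∑ i, δ i + (K : ℝ) - p * ∑ i ∈ A, δ i) := by
  have hcard : #A = #(univ.filter fun i : Fin K => (i : ℕ) < k) := by
    rw [hA, Fin.card_filter_val_lt, min_eq_right hkK]
  have hsum := hsort.sum_le_sum_of_isLowerSet (Fin.isLowerSet_filter_val_lt K k) hcard
  gcongr

/-- Action elimination: with ages sorted in descending order, success probability
`p ∈ [0,1]`, and `k` devices to schedule, the expected next-slot average age
`(1/K)(Σ_i δ_i + K − p Σ_{i∈A} δ_i)` is minimized over all subsets `A` of
cardinality `k` by scheduling the `k` devices with the largest current ages. -/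
theorem topk_minimizes_expected_age {K : ℕ} (δ : Fin K → ℝ)
    (hsort : Antitone δ) (hnonneg : ∀ i, 0 ≤ δ i)
    (p : ℝ) (hp0 : 0 ≤ p) (hp1 : p ≤ 1) (k : ℕ) (hkK : k ≤ K)
    (A : Finset (Fin K)) (hA : A.card = k) :
    (1 / (K : ℝ)) * (∑ i, δ i + (K : ℝ)
        - p * ∑ i ∈ univ.filter (fun i : Fin K => (i : ℕ) < k), δ i)
      ≤ (1 / (K : ℝ)) * (∑ i, δ i + (K : ℝ) - p * ∑ i ∈ A, δ i) :=
  topk_minimizes_expected_age_general δ hsort p hp0 k hkK A hA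
end

section
/- Let δ₁, …, δ_K ≥ 1 be the current ages, let 1 ≤ k ≤ K, let p ∈ (0,1], and suppose the k devices with the largest ages are scheduled, each succeeding independently with probability p (next age 1 on success, δ_i + 1 otherwise). Then with ω(s) = (1/K) Σ_{i=1}^{K} δ_i and β = 1 − p·k/K, the expected next-state weight satisfies E[ω(s')] ≤ β · ω(s) + 1, and β < 1. -/
/-!
Scheduled device `i` has expected next age `δ i + 1 - p * δ i`, every other one `δ i + 1`, so by
linearity of expectation `E[∑ δ'] = ∑ δ + K - p * ∑_{i<k} δ i`. Since the ages are sorted,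
Chebyshev's sum inequality against the indicator of the first `k` indices gives
`k * ∑ δ ≤ K * ∑_{i<k} δ i`, and this turns the identity into the drift bound.
-/

open Finset MeasureTheory ProbabilityTheory

theorem Antitone.card_mul_sum_le_mul_sum_val_lt {α : Type*} [Semiring α] [LinearOrder α]
    [IsStrictOrderedRing α] [ExistsAddOfLE α] {K k : ℕ} (hkK : k ≤ K) {f : Fin K → α}
    (hf : Antitone f) : k * ∑ i, f i ≤ K * ∑ i ∈ {i : Fin K | (i : ℕ) < k}, f i := by
  have htop : Antitone fun i : Fin K => if (i : ℕ) < k then (1 : α) else 0 := by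
    intro i j hij
    dsimp only
    split_ifs <;> first | rfl | exact zero_le_one | omega
  have := (hf.monovary htop).sum_mul_sum_le_card_mul_sum
  simpa [Finset.sum_filter, Fin.card_filter_val_lt, hkK, Nat.cast_comm] using this

namespace MeasureTheory

variable {Ω : Type*} [MeasurableSpace Ω] {μ : Measure Ω} {A : Set Ω} [DecidablePred (· ∈ A)]

theorem integrable_piecewise_const [IsFiniteMeasure μ] (hA : MeasurableSet A) (a b : ℝ) :
    Integrable (A.piecewise (fun _ => a) fun _ => b) μ :=
  .piecewise hA (integrable_const a).integrableOn (integrable_const b).integrableOn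

theorem integral_piecewise_const [IsProbabilityMeasure μ] (hA : MeasurableSet A) (a b : ℝ) :
    ∫ ω, A.piecewise (fun _ => a) (fun _ => b) ω ∂μ = b - (b - a) * μ.real A := by
  rw [integral_piecewise hA (integrable_const a).integrableOn (integrable_const b).integrableOn,
    setIntegral_const, setIntegral_const, measureReal_compl hA, probReal_univ, smul_eq_mul,
    smul_eq_mul]
  ring

end MeasureTheory

theorem geometric_drift_topk_general {K : ℕ} (δ : Fin K → ℝ)
    (hsort : Antitone δ)
    (k : ℕ) (hk : 1 ≤ k) (hkK : k ≤ K)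
    (p : ℝ) (hp0 : 0 < p)
    {Ω : Type*} [MeasurableSpace Ω] (μ : Measure Ω) [IsProbabilityMeasure μ]
    (J : Fin K → Ω → Bool) (hJmeas : ∀ i, Measurable (J i))
    (hJp : ∀ i, (μ {ω | J i ω = true}).toReal = p)
    (δ' : Fin K → Ω → ℝ)
    (hδ' : ∀ i ω, δ' i ω = if (i : ℕ) < k ∧ J i ω = true then 1 else δ i + 1) :
    ∫ ω, (1 / (K : ℝ)) * ∑ i, δ' i ω ∂μ
      ≤ (1 - p * (k : ℝ) / (K : ℝ)) * ((1 / (K : ℝ)) * ∑ i, δ i) + 1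
    ∧ 1 - p * (k : ℝ) / (K : ℝ) < 1 := by
  have hKpos : (0 : ℝ) < K := by exact_mod_cast hk.trans hkK
  set A : Fin K → Set Ω := fun i => {ω | (i : ℕ) < k ∧ J i ω = true}
  have hA : ∀ i, MeasurableSet (A i) := fun i =>
    (MeasurableSet.const _).inter (hJmeas i (measurableSet_singleton true))
  have hδ'_eq : ∀ i, δ' i = (A i).piecewise (fun _ => 1) fun _ => δ i + 1 :=
    fun i => funext (hδ' i)
  have hprob : ∀ i, μ.real (A i) = if (i : ℕ) < k then p else 0 := by
    intro i
    split_ifs with hi <;> simp [A, hi, measureReal_def, hJp]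
  have hmean : ∀ i, ∫ ω, δ' i ω ∂μ = δ i + 1 - p * if (i : ℕ) < k then δ i else 0 := by
    intro i
    rw [hδ'_eq, integral_piecewise_const (hA i), hprob]
    split_ifs <;> ring
  have hexp : ∫ ω, (1 / (K : ℝ)) * ∑ i, δ' i ω ∂μ
      = (1 / K) * (∑ i, δ i + K - p * ∑ i ∈ {i : Fin K | (i : ℕ) < k}, δ i) := by
    rw [integral_const_mul, integral_finsetSum _ fun i _ => hδ'_eq i ▸
      integrable_piecewise_const (hA i) _ _]
    simp only [hmean, sum_sub_distrib, sum_add_distrib, ← mul_sum, sum_filter]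
    simp
  have htop := hsort.card_mul_sum_le_mul_sum_val_lt hkK
  refine ⟨?_, by linarith [show 0 < p * k / K by positivity]⟩
  rw [hexp]
  field_simp
  linarith [mul_le_mul_of_nonneg_left htop hp0.le]

/-- Geometric drift: with ages `δ i ≥ 1` sorted in descending order, `1 ≤ k ≤ K`,
success probability `p ∈ (0,1]`, scheduling the `k` devices with the largest
ages (independent successes; next age `1` on success, `δ i + 1` otherwise), the
expected next-state weight `ω(s) = (1/K) Σ_i δ_i` satisfies
`E[ω(s')] ≤ β ω(s) + 1` with `β = 1 − p k / K < 1`. -/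
theorem geometric_drift_topk {K : ℕ} (δ : Fin K → ℝ)
    (hsort : Antitone δ) (hδ : ∀ i, 1 ≤ δ i)
    (k : ℕ) (hk : 1 ≤ k) (hkK : k ≤ K)
    (p : ℝ) (hp0 : 0 < p) (hp1 : p ≤ 1)
    {Ω : Type*} [MeasurableSpace Ω] (μ : Measure Ω) [IsProbabilityMeasure μ]
    (J : Fin K → Ω → Bool) (hJmeas : ∀ i, Measurable (J i))
    (hJindep : iIndepFun J μ)
    (hJp : ∀ i, (μ {ω | J i ω = true}).toReal = p)
    (δ' : Fin K → Ω → ℝ)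
    (hδ' : ∀ i ω, δ' i ω = if (i : ℕ) < k ∧ J i ω = true then 1 else δ i + 1) :
    ∫ ω, (1 / (K : ℝ)) * ∑ i, δ' i ω ∂μ
      ≤ (1 - p * (k : ℝ) / (K : ℝ)) * ((1 / (K : ℝ)) * ∑ i, δ i) + 1
    ∧ 1 - p * (k : ℝ) / (K : ℝ) < 1 :=
  geometric_drift_topk_general δ hsort k hk hkK p hp0 μ J hJmeas hJp δ' hδ'
end
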